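/- arXiv:1212.5802 — 2 statements merged into one kernel-verified Lean document; each statement's English description precedes it below -/
import Mathlib

section
/- Let Γ ⊆ ℕ be a numerical semigroup with finitely many gaps, let Δ ⊆ Γ be a finite subset of cardinality h, and let λ ∈ ℕ. Then for every η ∈ Δ with η ≤ λ one has σ_Δ(η) = #(Δ ∩ (η + Γ)) ≥ h − λ; in particular, min{σ_Δ(η) : η ∈ Δ, η ≤ λ} ≥ h − λ. -/
/-- Let `Γ ⊆ ℕ` be a numerical semigroup with finitely many gaps, `Δ ⊆ Γ` a
finite subset of cardinality `h`, and `l ∈ ℕ`.  Then for every `η ∈ Δ` with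
`η ≤ l` one has `σ_Δ(η) = #(Δ ∩ (η + Γ)) ≥ h - l`. -/
theorem sigma_ge_card_sub_lambda
    (Γ : Set ℕ) (h0 : (0 : ℕ) ∈ Γ)
    (hadd : ∀ a ∈ Γ, ∀ b ∈ Γ, a + b ∈ Γ)
    (hgaps : (Γᶜ).Finite)
    (Δ : Finset ℕ) (hΔ : ↑Δ ⊆ Γ) (h : ℕ) (hcard : Δ.card = h)
    (l : ℕ) :
    ∀ η ∈ Δ, η ≤ l →
      (h : ℤ) - (l : ℤ) ≤ ((↑Δ ∩ ((fun γ => η + γ) '' Γ)).ncard : ℤ) := by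
  intro η hηΔ hηl
  classical
  have hηΓ : η ∈ Γ := hΔ hηΔ
  have hmul : ∀ k a, a ∈ Γ → a + k * η ∈ Γ := by
    intro k
    induction k with
    | zero => simp
    | succ n ih =>
      intro a ha
      have := hadd _ (ih a ha) _ hηΓ
      have heq : a + n * η + η = a + (n + 1) * η := by ring
      rwa [heq] at this
  have hset : ↑Δ ∩ ((fun γ => η + γ) '' Γ)
      = ↑(Δ.filter fun d => d ∈ (fun γ => η + γ) '' Γ) := by
    ext x
    simp [Finset.mem_filter]
  rw [hset, Set.ncard_coe_finset]
  have key : ∀ a b : ℕ, a ∈ Γ → b ∉ (fun γ => η + γ) '' Γ → a ≤ b →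
      a % η = b % η → a = b := by
    intro a b ha hb hle hmod
    by_contra hne
    have hlt : a < b := lt_of_le_of_ne hle hne
    obtain ⟨k, hk⟩ : η ∣ b - a := (Nat.modEq_iff_dvd' hle).mp hmod
    have hk1 : 1 ≤ k := by
      rcases Nat.eq_zero_or_pos k with h' | h'
      · subst h'
        simp at hk
        omega
      · exact h'
    obtain ⟨m, rfl⟩ := Nat.exists_eq_add_of_le hk1
    apply hb
    refine ⟨a + m * η, hmul m a ha, ?_⟩
    simp only
    have hk' : b - a = η + m * η := by rw [hk]; ring
    omega
  have hcardB : (Δ.filter fun d => d ∉ (fun γ => η + γ) '' Γ).card ≤ η := by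
    rcases Nat.eq_zero_or_pos η with h0' | hpos
    · subst h0'
      have hemp : (Δ.filter fun d => d ∉ (fun γ => (0:ℕ) + γ) '' Γ) = ∅ := by
        rw [Finset.filter_eq_empty_iff]
        intro d hd hcon
        exact hcon ⟨d, hΔ hd, by simp⟩
      rw [hemp]
      simp
    · have hmaps : ∀ d ∈ (Δ.filter fun d => d ∉ (fun γ => η + γ) '' Γ),
          d % η ∈ Finset.range η := by
        intro d _
        exact Finset.mem_range.mpr (Nat.mod_lt _ hpos)
      have hinj : Set.InjOn (fun d : ℕ => d % η)
          ↑(Δ.filter fun d => d ∉ (fun γ => η + γ) '' Γ) := by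
        intro a ha b hb hab
        simp only [Finset.coe_filter, Set.mem_setOf_eq] at ha hb
        rcases le_total a b with hle | hle
        · exact key a b (hΔ ha.1) hb.2 hle hab
        · exact (key b a (hΔ hb.1) ha.2 hle hab.symm).symm
      have := Finset.card_le_card_of_injOn _ hmaps hinj
      simpa using this
  have hsum := Finset.card_filter_add_card_filter_not
    (s := Δ) (p := fun d => d ∈ (fun γ => η + γ) '' Γ)
  omega
end

section
/- Let q be a prime power, F = 𝔽_q, and let I ⊆ F[X₁,...,X_m] be an ideal. Let I_q = I + ⟨X₁^q − X₁, ..., X_m^q − X_m⟩ and let V = {P ∈ F^m : f(P) = 0 for all f ∈ I} be the set of F-rational points of the variety of I. Then the F-linear map ev : F[X₁,...,X_m]/I_q → F^V defined by ev(f + I_q) = (f(P))_{P ∈ V} is well defined and is an isomorphism of F-vector spaces (indeed of F-algebras, where F^V carries the componentwise product). -/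
/-!
Evaluation at the points of `V` is a surjective algebra map (every function on `F^m` is a
polynomial), and its kernel is the vanishing ideal of `V`, which equals `I + ⟨X_j^q - X_j⟩`.
For `V = F^m` this is Alon's combinatorial Nullstellensatz on the grid `F^m`, because
`∏_{a ∈ F} (X - a) = X^q - X`. In general, if `f` vanishes on `V`, choose for every point
`x ∉ V` some `u_x ∈ I` with `u_x(x) = 1`. Then `e = ∏_x (1 - u_x)` is `1` modulo `I` and `f e`
vanishes on all of `F^m`, so `f = f (1 - e) + f e ∈ I + ⟨X_j^q - X_j⟩`.
-/

open Polynomial in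
theorem FiniteField.prod_X_sub_C_eq_X_pow_card_sub_X (K : Type*) [Field K] [Fintype K] :
    ∏ a : K, (X - C a) = (X ^ Fintype.card K - X : K[X]) := by
  have hq : 1 < Fintype.card K := Fintype.one_lt_card
  have hmonic : (X ^ Fintype.card K - X : K[X]).Monic :=
    monic_X_pow_sub (by rw [degree_X]; exact_mod_cast hq)
  have hroots := FiniteField.roots_X_pow_card_sub_X K
  have hcard : Multiset.card (X ^ Fintype.card K - X : K[X]).roots =
      (X ^ Fintype.card K - X : K[X]).natDegree := by
    rw [hroots, FiniteField.X_pow_card_sub_X_natDegree_eq K hq]; rfl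
  rw [← prod_multiset_X_sub_C_of_monic_of_roots_card_eq hmonic hcard, hroots]
  rfl

namespace MvPolynomial

variable {σ K : Type*} [Field K]

noncomputable def evalOn (V : Set (σ → K)) : MvPolynomial σ K →ₐ[K] (V → K) :=
  AlgHom.pi fun x => aeval x.1

@[simp]
theorem evalOn_apply (V : Set (σ → K)) (f : MvPolynomial σ K) (x : V) :
    evalOn V f x = eval x.1 f := by
  simp [evalOn]

theorem ker_evalOn (V : Set (σ → K)) : RingHom.ker (evalOn V) = vanishingIdeal K V := by
  ext f
  rw [RingHom.mem_ker, mem_vanishingIdeal_iff]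
  exact _root_.funext_iff.trans Subtype.forall

theorem exists_mem_aeval_eq_one_of_notMem_zeroLocus (I : Ideal (MvPolynomial σ K))
    (x : σ → K) : ∃ u ∈ I, x ∉ zeroLocus K I → aeval x u = 1 := by
  by_cases hx : x ∈ zeroLocus K I
  · exact ⟨0, I.zero_mem, fun h => (h hx).elim⟩
  · obtain ⟨g, hgI, hgx⟩ := not_forall₂.1 hx
    exact ⟨C (aeval x g)⁻¹ * g, I.mul_mem_left _ hgI,
      fun _ => by simpa using inv_mul_cancel₀ hgx⟩

variable [Fintype K]

theorem prod_X_sub_C_eq_X_pow_card_sub_X (i : σ) :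
    ∏ a : K, (X i - C a : MvPolynomial σ K) = X i ^ Fintype.card K - X i := by
  simpa using congrArg (Polynomial.aeval (X i : MvPolynomial σ K))
    (FiniteField.prod_X_sub_C_eq_X_pow_card_sub_X K)

variable (σ K) in
noncomputable def fieldEquations : Ideal (MvPolynomial σ K) :=
  Ideal.span (Set.range fun i => X i ^ Fintype.card K - X i)

theorem vanishingIdeal_univ [Finite σ] :
    vanishingIdeal K (Set.univ : Set (σ → K)) = fieldEquations σ K := by
  refine le_antisymm (fun p hp => ?_) ?_
  · obtain ⟨h, -, rfl⟩ := combinatorial_nullstellensatz_exists_linearCombination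
      (fun _ => Finset.univ) (fun _ => Finset.univ_nonempty) p
      (fun x _ => by simpa using hp x (Set.mem_univ x))
    simp only [prod_X_sub_C_eq_X_pow_card_sub_X]
    exact Finsupp.mem_span_range_iff_exists_finsupp.2 ⟨h, rfl⟩
  · rw [fieldEquations, Ideal.span_le]
    rintro _ ⟨i, rfl⟩ x -
    simp [FiniteField.pow_card]

theorem vanishingIdeal_zeroLocus_eq_sup_fieldEquations [Finite σ]
    (I : Ideal (MvPolynomial σ K)) :
    vanishingIdeal K (zeroLocus K I) = I ⊔ fieldEquations σ K := by
  refine le_antisymm (fun f hf => ?_) (sup_le (le_vanishingIdeal_zeroLocus I) ?_)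
  · have := Fintype.ofFinite σ
    classical
    choose u huI hu using exists_mem_aeval_eq_one_of_notMem_zeroLocus I
    set e := ∏ x, (1 - u x)
    have he : 1 - e ∈ I := by
      rw [← Ideal.Quotient.eq_zero_iff_mem]
      simp [e, map_prod, Ideal.Quotient.eq_zero_iff_mem.2 (huI _)]
    have hfe : f * e ∈ fieldEquations σ K := by
      rw [← vanishingIdeal_univ]
      rintro x -
      by_cases hx : x ∈ zeroLocus K I
      · rw [map_mul, hf x hx, zero_mul]
      · rw [map_mul, map_prod, Finset.prod_eq_zero (Finset.mem_univ x)
          (by rw [map_sub, map_one, hu x hx, sub_self]), mul_zero]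
    rw [show f = f * (1 - e) + f * e by ring]
    exact Ideal.add_mem _ (Ideal.mem_sup_left (I.mul_mem_left f he)) (Ideal.mem_sup_right hfe)
  · rw [← vanishingIdeal_univ]
    exact vanishingIdeal_anti_mono (Set.subset_univ _)

theorem evalOn_surjective [Finite σ] (V : Set (σ → K)) : Function.Surjective (evalOn V) := by
  classical
  intro g
  obtain ⟨p, -, hp⟩ := Submodule.mem_map.1
    ((map_restrict_dom_evalₗ K σ).symm ▸ Submodule.mem_top :
      (fun x => if hx : x ∈ V then g ⟨x, hx⟩ else 0) ∈ _)
  refine ⟨p, ?_⟩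
  funext x
  simpa using congrFun hp x

end MvPolynomial

/-- The evaluation map `ev : F[X_1,...,X_m]/I_q → F^V`, `f + I_q ↦ (f(P))_{P ∈ V}`,
where `I_q = I + ⟨X_j^q - X_j⟩` and `V` is the set of `F`-rational points of the
variety of `I`, is well defined and an isomorphism of `F`-algebras (hence of
`F`-vector spaces). -/
theorem evaluation_map_isomorphism
    (F : Type*) [Field F] [Fintype F] (m : ℕ)
    (I : Ideal (MvPolynomial (Fin m) F))
    (Iq : Ideal (MvPolynomial (Fin m) F))
    (hIq : Iq = I ⊔ Ideal.span (Set.range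
      (fun j : Fin m => MvPolynomial.X j ^ (Fintype.card F) - MvPolynomial.X j)))
    (V : Set (Fin m → F))
    (hV : V = {P : Fin m → F | ∀ f ∈ I, MvPolynomial.eval P f = 0}) :
    ∃ e : (MvPolynomial (Fin m) F ⧸ Iq) ≃ₐ[F] (V → F),
      ∀ f : MvPolynomial (Fin m) F,
        e (Ideal.Quotient.mk Iq f) = fun P : V => MvPolynomial.eval (P : Fin m → F) f := by
  have hV' : V = MvPolynomial.zeroLocus F I := hV
  have hker : RingHom.ker (MvPolynomial.evalOn V) = Iq := by
    rw [MvPolynomial.ker_evalOn, hV',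
      MvPolynomial.vanishingIdeal_zeroLocus_eq_sup_fieldEquations, hIq,
      MvPolynomial.fieldEquations]
  refine ⟨(Ideal.quotientEquivAlgOfEq F hker.symm).trans
    (Ideal.quotientKerAlgEquivOfSurjective (MvPolynomial.evalOn_surjective V)), fun f => ?_⟩
  funext P
  simp
end
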